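/- For a uniformly random permutation tableau of size n and for 1 ≤ k ≤ n−1, the probability that the k-th border edge is a south step and the (k+1)-th border edge is a west step equals (n−k+1)/n − (n−k)²/(n(n−1)). -/

import Mathlib

/-!
Deleting the last border edge is a bijection from permutation tableaux of size `m + 1` onto pairs
`(T, e)`, where `T` has size `m` and `e` is either an empty bottom row or a new first column whose
`1`s sit in a nonempty set `A` of unrestricted rows of `T`. The unrestricted rows of the extension
are those of `T` plus the new row, respectively `A` together with the unrestricted rows of `T`
above `A`; hence the weights `q ^ U` of all extensions of `T` add up to `q * (q + 1) ^ U(T)`. For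
an event decided by the first `m` border edges, the `q ^ U`-weighted count at size `m + 1` is
therefore `q` times the `(q + 1) ^ U`-weighted count at size `m`. Starting from `q = 1`, this
reduces the number of tableaux with a corner at `k` to a weighted count at size `k + 1`, where the
corner forces the last edge to be west; removing that column and then the row ending in the south
step `k` leaves weighted counts of all tableaux, which are rising factorials.
-/

open scoped BigOperators
open Nat

/-- The `t`-th border edge (1-indexed, read from northeast to southwest) of a Ferrers
shape with `cols` columns (rows given by the Young diagram `D`, possibly together with
extra empty rows) is a south step.  The south step belonging to row `i` occurs at
position `i + 1 + (cols - rowLen i)`. -/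
def IsSouth (D : YoungDiagram) (cols t : ℕ) : Prop :=
  ∃ i, t = i + 1 + (cols - D.rowLen i)

/-- Corners of a Ferrers diagram: cells whose right and bottom edges are both border
edges. -/
noncomputable def cornerCount (D : YoungDiagram) : ℕ :=
  {c : ℕ × ℕ | c ∈ D ∧ (c.1 + 1, c.2) ∉ D ∧ (c.1, c.2 + 1) ∉ D}.ncard

/-- A permutation tableau of size `n`: a Ferrers diagram of half-perimeter `n`
(`rows` rows, possibly empty, with the nonempty rows forming the Young diagram
`shape`) filled with `0`s and `1`s (`filling c = true` means the cell `c` contains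
a `1`), such that every column contains at least one `1` and no `0` has a `1` above
it in its column and simultaneously a `1` to its left in its row. -/
structure PermTableau (n : ℕ) where
  shape : YoungDiagram
  rows : ℕ
  rows_pos : 0 < rows
  rows_ge : shape.colLen 0 ≤ rows
  half : rows + shape.rowLen 0 = n
  filling : ℕ × ℕ → Bool
  support : ∀ c : ℕ × ℕ, c ∉ shape → filling c = false
  col_one : ∀ j < shape.rowLen 0, ∃ i, filling (i, j) = true
  avoid : ∀ i j : ℕ, (i, j) ∈ shape → filling (i, j) = false →
      (∃ i' < i, filling (i', j) = true) → ∀ j' < j, filling (i, j') = false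

/-- The `t`-th border edge of a permutation tableau is a south step. -/
def PermTableau.south {n : ℕ} (T : PermTableau n) (t : ℕ) : Prop :=
  IsSouth T.shape (T.shape.rowLen 0) t

/-- Row `i` of a permutation tableau is unrestricted: it contains no restricted `0`
(a `0` with a `1` above it in its column). -/
def PermTableau.unres {n : ℕ} (T : PermTableau n) (i : ℕ) : Prop :=
  ∀ j, (i, j) ∈ T.shape → T.filling (i, j) = false → ∀ i' < i, T.filling (i', j) = false

/-- The number of unrestricted rows of a permutation tableau. -/
noncomputable def PermTableau.U {n : ℕ} (T : PermTableau n) : ℕ :=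
  {i | i < T.rows ∧ T.unres i}.ncard

/-- A tree-like tableau of size `n`: a Ferrers diagram of half-perimeter `n + 1`
with pointed cells such that the top-left cell is pointed (the root point), every
row and every column contains a pointed cell, for every pointed cell all the cells
above it are empty or all the cells to its left are empty, and every non-root point
has a point above it or to its left (so that the points form a tree rooted at the
root point). -/
structure TreeLike (n : ℕ) where
  shape : YoungDiagram
  half : shape.colLen 0 + shape.rowLen 0 = n + 1
  point : ℕ × ℕ → Bool
  support : ∀ c : ℕ × ℕ, c ∉ shape → point c = false
  root : point (0, 0) = true
  row_point : ∀ i < shape.colLen 0, ∃ j, point (i, j) = true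
  col_point : ∀ j < shape.rowLen 0, ∃ i, point (i, j) = true
  cond : ∀ i j : ℕ, point (i, j) = true →
      (∀ i' < i, point (i', j) = false) ∨ (∀ j' < j, point (i, j') = false)
  conn : ∀ i j : ℕ, point (i, j) = true → (i, j) ≠ (0, 0) →
      (∃ i' < i, point (i', j) = true) ∨ (∃ j' < j, point (i, j') = true)

/-- The `t`-th border edge of a tree-like tableau is a south step (there are `n + 1`
border edges). -/
def TreeLike.south {n : ℕ} (T : TreeLike n) (t : ℕ) : Prop :=
  IsSouth T.shape (T.shape.rowLen 0) t

/-- A symmetric tree-like tableau of size `2 * n + 1`: a tree-like tableau invariant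
under reflection about the main diagonal. -/
structure SymTreeLike (n : ℕ) extends TreeLike (2 * n + 1) where
  sym_shape : toTreeLike.shape.transpose = toTreeLike.shape
  sym_point : ∀ i j : ℕ, toTreeLike.point (i, j) = toTreeLike.point (j, i)

/-- Cells of a shifted Ferrers diagram with `k` columns: on top a staircase of `k`
added rows, row `i` (for `i < k`) having the `i + 1` cells in columns `0, …, i`
with rightmost (diagonal) cell `(i, i)`, and below it the rows of the Ferrers
diagram `D` (row `k + i` of the shifted diagram is row `i` of `D`). -/
def BCell (k : ℕ) (D : YoungDiagram) (c : ℕ × ℕ) : Prop :=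
  (c.1 < k ∧ c.2 ≤ c.1) ∨ (k ≤ c.1 ∧ (c.1 - k, c.2) ∈ D)

/-- A type-B permutation tableau of size `n`: a shifted Ferrers diagram of
half-perimeter `n` (`cols` columns and `n - cols` lower rows, possibly empty, the
nonempty ones forming the Young diagram `shape`) filled with `0`s and `1`s such
that every column contains at least one `1`, no `0` has a `1` above it in its
column and simultaneously a `1` on its side in its row, and every row whose
diagonal cell contains a `0` is entirely filled with `0`s. -/
structure BTableau (n : ℕ) where
  cols : ℕ
  cols_le : cols ≤ n
  shape : YoungDiagram
  rows_ge : shape.colLen 0 ≤ n - cols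
  width_le : shape.rowLen 0 ≤ cols
  filling : ℕ × ℕ → Bool
  support : ∀ c : ℕ × ℕ, ¬ BCell cols shape c → filling c = false
  col_one : ∀ j < cols, ∃ i, filling (i, j) = true
  avoid : ∀ i j : ℕ, BCell cols shape (i, j) → filling (i, j) = false →
      (∃ i' < i, filling (i', j) = true) → ∀ j' < j, filling (i, j') = false
  diag : ∀ i < cols, filling (i, i) = false → ∀ j, filling (i, j) = false

/-- The `t`-th border edge of a type-B permutation tableau is a south step (there
are `n` border edges, those of the underlying, unshifted, Ferrers diagram). -/
def BTableau.south {n : ℕ} (B : BTableau n) (t : ℕ) : Prop :=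
  IsSouth B.shape B.cols t

/-- Row `i` (among the `n` rows of the shifted diagram) of a type-B permutation
tableau is unrestricted: it contains no restricted `0` and no diagonal `0`. -/
def BTableau.unres {n : ℕ} (B : BTableau n) (i : ℕ) : Prop :=
  (i < B.cols → B.filling (i, i) = true) ∧
  ∀ j, BCell B.cols B.shape (i, j) → B.filling (i, j) = false →
    ∀ i' < i, B.filling (i', j) = false

/-- The number of unrestricted rows of a type-B permutation tableau. -/
noncomputable def BTableau.U {n : ℕ} (B : BTableau n) : ℕ :=
  {i | i < n ∧ B.unres i}.ncard

/-- The number of corners of a type-B permutation tableau: occurrences of a south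
border step immediately followed by a west border step. -/
noncomputable def BTableau.corners {n : ℕ} (B : BTableau n) : ℕ :=
  {k | 1 ≤ k ∧ k + 1 ≤ n ∧ B.south k ∧ ¬ B.south (k + 1)}.ncard

namespace YoungDiagram

lemma rowLen_eq_of_forall_mem_iff {μ : YoungDiagram} {i c : ℕ}
    (h : ∀ j, (i, j) ∈ μ ↔ j < c) : μ.rowLen i = c :=
  eq_of_forall_lt_iff fun j => by rw [← mem_iff_lt_rowLen, h]

lemma colLen_eq_of_forall_mem_iff {μ : YoungDiagram} {j c : ℕ}
    (h : ∀ i, (i, j) ∈ μ ↔ i < c) : μ.colLen j = c :=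
  eq_of_forall_lt_iff fun i => by rw [← mem_iff_lt_colLen, h]

lemma rowLen_eq_zero_iff {μ : YoungDiagram} {i : ℕ} : μ.rowLen i = 0 ↔ μ.colLen 0 ≤ i := by
  rw [← not_lt, ← mem_iff_lt_colLen, mem_iff_lt_rowLen, Nat.pos_iff_ne_zero, not_not]

noncomputable def dropFirstCol (μ : YoungDiagram) : YoungDiagram where
  cells := μ.cells.preimage (Prod.map id Nat.succ) (Prod.map_injective.2
    ⟨Function.injective_id, Nat.succ_injective⟩).injOn
  isLowerSet := fun _ _ hle hc => by
    simp only [Finset.coe_preimage, Set.mem_preimage, Finset.mem_coe, mem_cells] at hc ⊢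
    exact μ.isLowerSet (Prod.mk_le_mk.2 ⟨hle.1, Nat.succ_le_succ hle.2⟩) hc

@[simp] lemma mem_dropFirstCol {μ : YoungDiagram} {i j : ℕ} :
    (i, j) ∈ μ.dropFirstCol ↔ (i, j + 1) ∈ μ := by
  simp [dropFirstCol, ← mem_cells]

def consCol (μ : YoungDiagram) (r : ℕ) (h : μ.colLen 0 ≤ r) : YoungDiagram where
  cells := Finset.range r ×ˢ {0} ∪ μ.cells.map (Function.Embedding.prodMap
    (Function.Embedding.refl ℕ) ⟨Nat.succ, Nat.succ_injective⟩)
  isLowerSet := by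
    rintro ⟨i', j'⟩ ⟨i, j⟩ ⟨hi, hj⟩ hc
    simp only [Finset.product_singleton, Finset.coe_union, Finset.coe_map,
      Function.Embedding.coeFn_mk, Finset.coe_range, Function.Embedding.coe_prodMap,
      Set.mem_union, Set.mem_image, Set.mem_Iio, Prod.mk.injEq, existsAndEq, true_and,
      SetLike.mem_coe, mem_cells, Prod.exists, Prod.map_apply, Function.Embedding.refl_apply,
      succ_eq_add_one] at hi hj hc ⊢
    rcases j with _ | j
    · refine Or.inl ⟨?_, rfl⟩
      rcases hc with ⟨hr, -⟩ | ⟨b, hb, -⟩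
      · omega
      · have := mem_iff_lt_colLen.1 (μ.up_left_mem le_rfl (Nat.zero_le b) hb)
        omega
    · rcases hc with ⟨-, rfl⟩ | ⟨b, hb, rfl⟩
      · omega
      · exact Or.inr ⟨j, μ.up_left_mem hi (by omega) hb, rfl⟩

variable {μ : YoungDiagram} {r : ℕ} {h : μ.colLen 0 ≤ r} {i j : ℕ}

@[simp] lemma mem_consCol_zero : (i, 0) ∈ μ.consCol r h ↔ i < r := by
  simp [consCol, ← mem_cells]

@[simp] lemma mem_consCol_succ : (i, j + 1) ∈ μ.consCol r h ↔ (i, j) ∈ μ := by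
  simp [consCol, ← mem_cells]

lemma colLen_consCol_zero : (μ.consCol r h).colLen 0 = r :=
  colLen_eq_of_forall_mem_iff fun _ => mem_consCol_zero

lemma rowLen_consCol_of_lt (hi : i < r) : (μ.consCol r h).rowLen i = μ.rowLen i + 1 :=
  rowLen_eq_of_forall_mem_iff fun j => by
    cases j
    · simp only [mem_consCol_zero, hi, Nat.zero_lt_succ]
    · rw [mem_consCol_succ, mem_iff_lt_rowLen, Nat.add_lt_add_iff_right]

lemma rowLen_consCol_of_le (hi : r ≤ i) : (μ.consCol r h).rowLen i = 0 :=
  rowLen_eq_zero_iff.2 (by rw [colLen_consCol_zero]; exact hi)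

lemma rowLen_dropFirstCol : μ.dropFirstCol.rowLen i = μ.rowLen i - 1 :=
  rowLen_eq_of_forall_mem_iff fun j => by rw [mem_dropFirstCol, mem_iff_lt_rowLen]; omega

lemma colLen_dropFirstCol : μ.dropFirstCol.colLen j = μ.colLen (j + 1) :=
  colLen_eq_of_forall_mem_iff fun i => by rw [mem_dropFirstCol, mem_iff_lt_colLen]

lemma colLen_dropFirstCol_le : μ.dropFirstCol.colLen 0 ≤ μ.colLen 0 :=
  colLen_dropFirstCol.trans_le (μ.colLen_anti 0 1 zero_le_one)

@[simp] lemma dropFirstCol_consCol : (μ.consCol r h).dropFirstCol = μ := by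
  ext ⟨i, j⟩
  simp

lemma consCol_dropFirstCol (hr : μ.colLen 0 = r) (h : μ.dropFirstCol.colLen 0 ≤ r) :
    μ.dropFirstCol.consCol r h = μ := by
  ext ⟨i, j | j⟩
  · rw [mem_cells, mem_cells, mem_consCol_zero, mem_iff_lt_colLen, hr]
  · simp

end YoungDiagram

section IsSouth

variable {μ : YoungDiagram} {r c t : ℕ}

lemma isSouth_of_colLen_le (h : μ.colLen 0 ≤ r) : IsSouth μ c (r + c + 1) :=
  ⟨r, by rw [YoungDiagram.rowLen_eq_zero_iff.2 h]; omega⟩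

lemma isSouth_consCol_iff {h : μ.colLen 0 ≤ r} (ht : t ≤ r + c) :
    IsSouth (μ.consCol r h) (c + 1) t ↔ IsSouth μ c t := by
  refine exists_congr fun i => ?_
  rcases lt_or_ge i r with hi | hi
  · rw [YoungDiagram.rowLen_consCol_of_lt hi, Nat.add_sub_add_right]
  · rw [YoungDiagram.rowLen_consCol_of_le hi, YoungDiagram.rowLen_eq_zero_iff.2 (h.trans hi)]
    omega

lemma not_isSouth_consCol {h : μ.colLen 0 ≤ r} :
    ¬ IsSouth (μ.consCol r h) (c + 1) (r + c + 1) := by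
  rintro ⟨i, hi⟩
  rcases lt_or_ge i r with hir | hir
  · rw [YoungDiagram.rowLen_consCol_of_lt hir] at hi
    omega
  · rw [YoungDiagram.rowLen_consCol_of_le hir] at hi
    omega

end IsSouth

namespace Finset

variable {α R : Type*} [CommSemiring R]

lemma sum_powerset_pow_card (q : R) (S : Finset α) :
    ∑ A ∈ S.powerset, q ^ #A = (q + 1) ^ #S := by
  simpa using sum_pow_mul_eq_add_pow q 1 S

variable [LinearOrder α]

lemma pow_card_succ_add_sum_powerset_nonempty (q : R) (S : Finset α) :
    q ^ (#S + 1) +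
        ∑ A ∈ S.powerset with A.Nonempty, q ^ (#A + #{i ∈ S | ∀ a ∈ A, i < a}) =
      q * (q + 1) ^ #S := by
  induction S using Finset.induction_on_min with
  | empty => simp [filter_singleton]
  | insert x S hx ih =>
    have hxS : x ∉ S := fun h => lt_irrefl x (hx x h)
    have below_insert (A : Finset α) (hA : A ⊆ S) :
        {i ∈ insert x S | ∀ a ∈ A, i < a} = insert x {i ∈ S | ∀ a ∈ A, i < a} := by
      rw [filter_insert, if_pos fun a ha => hx a (hA ha)]
    have below_of_mem (A : Finset α) : {i ∈ insert x S | ∀ a ∈ insert x A, i < a} = ∅ := by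
      refine filter_eq_empty_iff.2 fun i hi hlt => ?_
      rcases mem_insert.1 hi with rfl | hi
      · exact lt_irrefl i (hlt i (mem_insert_self i A))
      · exact lt_asymm (hx i hi) (hlt x (mem_insert_self x A))
    rw [sum_filter, sum_powerset_insert hxS, ← sum_filter]
    have sum_without_x :
        ∑ A ∈ S.powerset with A.Nonempty, q ^ (#A + #{i ∈ insert x S | ∀ a ∈ A, i < a}) =
          q * ∑ A ∈ S.powerset with A.Nonempty, q ^ (#A + #{i ∈ S | ∀ a ∈ A, i < a}) := by
      rw [mul_sum]
      refine sum_congr rfl fun A hA => ?_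
      rw [below_insert A (mem_powerset.1 (mem_filter.1 hA).1),
        card_insert_of_notMem fun h => hxS (mem_filter.1 h).1, ← add_assoc, pow_succ, mul_comm]
    have sum_with_x : ∑ A ∈ S.powerset, (if (insert x A).Nonempty then
        q ^ (#(insert x A) + #{i ∈ insert x S | ∀ a ∈ insert x A, i < a}) else 0) =
          q * (q + 1) ^ #S := by
      rw [← sum_powerset_pow_card, mul_sum]
      refine sum_congr rfl fun A hA => ?_
      rw [if_pos (insert_nonempty x A), below_of_mem, card_empty, add_zero,
        card_insert_of_notMem fun h => hxS (mem_powerset.1 hA h), pow_succ, mul_comm]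
    rw [sum_without_x, sum_with_x, card_insert_of_notMem hxS]
    calc _ = q * (q ^ (#S + 1) + ∑ A ∈ S.powerset with A.Nonempty,
          q ^ (#A + #{i ∈ S | ∀ a ∈ A, i < a})) + q * (q + 1) ^ #S := by ring
      _ = q * (q + 1) ^ (#S + 1) := by rw [ih]; ring

end Finset

attribute [ext] PermTableau

namespace PermTableau

open Finset YoungDiagram

variable {m : ℕ}

lemma south_one (T : PermTableau m) : T.south 1 := ⟨0, by simp⟩

def IsCorner (T : PermTableau m) (k : ℕ) : Prop := T.south k ∧ ¬ T.south (k + 1)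

lemma unres_of_rows_le (T : PermTableau m) {i : ℕ} (hi : T.rows ≤ i) : T.unres i :=
  fun j hj => by
  have := (T.shape.colLen_anti 0 j j.zero_le).trans T.rows_ge
  exact absurd (mem_iff_lt_colLen.1 hj) (by omega)

open scoped Classical in
noncomputable def unresRows (T : PermTableau m) : Finset ℕ :=
  (range T.rows).filter T.unres

lemma mem_unresRows {T : PermTableau m} {i : ℕ} :
    i ∈ T.unresRows ↔ i < T.rows ∧ T.unres i := by
  simp [unresRows]

/-- The possible positions of the `1`s of a new first column: there must be one, and a `1` left of
a restricted `0` is forbidden. -/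
noncomputable def colChoices (T : PermTableau m) : Finset (Finset ℕ) :=
  T.unresRows.powerset.filter Finset.Nonempty

lemma mem_colChoices {T : PermTableau m} {A : Finset ℕ} :
    A ∈ T.colChoices ↔ A ⊆ T.unresRows ∧ A.Nonempty := by
  simp [colChoices]

def addRow (T : PermTableau m) : PermTableau (m + 1) :=
  { T with
    rows := T.rows + 1
    rows_pos := T.rows.succ_pos
    rows_ge := T.rows_ge.trans T.rows.le_succ
    half := by have := T.half; omega }

def addCol (T : PermTableau m) (A : Finset ℕ) (hA : A ∈ T.colChoices) :
    PermTableau (m + 1) where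
  shape := T.shape.consCol T.rows T.rows_ge
  rows := T.rows
  rows_pos := T.rows_pos
  rows_ge := colLen_consCol_zero.le
  half := by have := T.half; rw [rowLen_consCol_of_lt T.rows_pos]; omega
  filling
    | (i, 0) => decide (i ∈ A)
    | (i, j + 1) => T.filling (i, j)
  support := by
    rintro ⟨i, _ | j⟩ hc
    · rw [mem_consCol_zero] at hc
      exact decide_eq_false fun hi => hc (mem_unresRows.1 (mem_colChoices.1 hA |>.1 hi)).1
    · exact T.support (i, j) (by simpa using hc)
  col_one := by
    rintro (_ | j) hj
    · obtain ⟨a, ha⟩ := (mem_colChoices.1 hA).2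
      exact ⟨a, decide_eq_true ha⟩
    · rw [rowLen_consCol_of_lt T.rows_pos] at hj
      exact T.col_one j (by omega)
  avoid := by
    rintro i (_ | j) hij h0 ⟨i', hi', h1⟩ (_ | j') hj'
    · omega
    · omega
    · refine decide_eq_false fun hiA => ?_
      have hunres := (mem_unresRows.1 (mem_colChoices.1 hA |>.1 hiA)).2
      exact absurd h1 (by simpa using hunres j (by simpa using hij) h0 i' hi')
    · exact T.avoid i j (by simpa using hij) h0 ⟨i', hi', h1⟩ j' (by omega)

section Extensions

variable (T : PermTableau m) {A : Finset ℕ} (hA : A ∈ T.colChoices)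

@[simp] lemma addRow_rows : T.addRow.rows = T.rows + 1 := rfl
@[simp] lemma addCol_shape : (T.addCol A hA).shape = T.shape.consCol T.rows T.rows_ge := rfl
@[simp] lemma addCol_rows : (T.addCol A hA).rows = T.rows := rfl
@[simp] lemma addCol_filling_zero (i : ℕ) :
    (T.addCol A hA).filling (i, 0) = decide (i ∈ A) := rfl
@[simp] lemma addCol_filling_succ (i j : ℕ) :
    (T.addCol A hA).filling (i, j + 1) = T.filling (i, j) := rfl

lemma colLen_addRow_lt : T.addRow.shape.colLen 0 < T.addRow.rows :=
  Nat.lt_succ_of_le T.rows_ge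

lemma colLen_addCol :
    (T.addCol A hA).shape.colLen 0 = (T.addCol A hA).rows :=
  colLen_consCol_zero (h := T.rows_ge)

lemma south_addRow_last : T.addRow.south (m + 1) := by
  have h := isSouth_of_colLen_le (c := T.shape.rowLen 0) T.rows_ge
  rwa [T.half] at h

lemma south_addCol_iff {t : ℕ} (ht : t ≤ m) : (T.addCol A hA).south t ↔ T.south t := by
  rw [south, addCol_shape, rowLen_consCol_of_lt T.rows_pos]
  exact isSouth_consCol_iff (by have := T.half; omega)

lemma not_south_addCol_last : ¬ (T.addCol A hA).south (m + 1) := by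
  have h := not_isSouth_consCol (c := T.shape.rowLen 0) (h := T.rows_ge)
  rw [T.half] at h
  rwa [south, addCol_shape, rowLen_consCol_of_lt T.rows_pos]

lemma isCorner_addCol_iff {k : ℕ} (hk : k + 1 ≤ m) :
    (T.addCol A hA).IsCorner k ↔ T.IsCorner k := by
  rw [IsCorner, IsCorner, south_addCol_iff T hA (by omega), south_addCol_iff T hA hk]

lemma not_isCorner_addRow_last : ¬ T.addRow.IsCorner m := fun h => h.2 (south_addRow_last T)

lemma isCorner_addCol_last_iff : (T.addCol A hA).IsCorner m ↔ T.south m := by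
  rw [IsCorner, south_addCol_iff T hA le_rfl]
  exact and_iff_left (not_south_addCol_last T hA)

lemma unres_addCol_iff {i : ℕ} :
    (T.addCol A hA).unres i ↔ (i < T.rows → i ∉ A → ∀ a ∈ A, i ≤ a) ∧ T.unres i := by
  constructor
  · intro h
    refine ⟨fun hi hiA a ha => not_lt.1 fun hai => ?_, fun j hj h0 i' hi' => ?_⟩
    · simpa [ha] using h 0 (by simpa using hi) (by simpa using hiA) a hai
    · simpa using h (j + 1) (by simpa using hj) (by simpa using h0) i' hi'
  · rintro ⟨h0, hT⟩ (_ | j) hij hf i' hi'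
    · simp only [addCol_shape, mem_consCol_zero, addCol_filling_zero,
        decide_eq_false_iff_not] at hij hf ⊢
      exact fun hi'A => absurd (h0 hij hf i' hi'A) (not_le.2 hi')
    · simpa using hT j (by simpa using hij) (by simpa using hf) i' hi'

lemma unresRows_addRow : T.addRow.unresRows = insert T.rows T.unresRows := by
  ext i
  rw [mem_insert, mem_unresRows, mem_unresRows, addRow_rows, Nat.lt_succ_iff_lt_or_eq]
  constructor
  · rintro ⟨hi | rfl, hu⟩
    exacts [Or.inr ⟨hi, hu⟩, Or.inl rfl]
  · rintro (rfl | ⟨hi, hu⟩)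
    exacts [⟨Or.inr rfl, T.unres_of_rows_le le_rfl⟩, ⟨Or.inl hi, hu⟩]

lemma card_unresRows_addRow : #T.addRow.unresRows = #T.unresRows + 1 := by
  rw [unresRows_addRow, card_insert_of_notMem fun h => lt_irrefl _ (mem_unresRows.1 h).1]

lemma unresRows_addCol :
    (T.addCol A hA).unresRows = A ∪ {i ∈ T.unresRows | ∀ a ∈ A, i < a} := by
  ext i
  rw [mem_union, mem_filter, mem_unresRows, mem_unresRows, unres_addCol_iff, addCol_rows]
  constructor
  · rintro ⟨hi, hA', hu⟩
    by_cases hiA : i ∈ A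
    · exact Or.inl hiA
    · exact Or.inr ⟨⟨hi, hu⟩, fun a ha =>
        (hA' hi hiA a ha).lt_of_ne (ne_of_mem_of_not_mem ha hiA).symm⟩
  · rintro (hiA | ⟨⟨hi, hu⟩, hlt⟩)
    · obtain ⟨hi, hu⟩ := mem_unresRows.1 ((mem_colChoices.1 hA).1 hiA)
      exact ⟨hi, fun _ h => absurd hiA h, hu⟩
    · exact ⟨hi, fun _ _ a ha => (hlt a ha).le, hu⟩

lemma card_unresRows_addCol :
    #(T.addCol A hA).unresRows = #A + #{i ∈ T.unresRows | ∀ a ∈ A, i < a} := by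
  rw [unresRows_addCol, card_union_of_disjoint]
  exact disjoint_left.2 fun a ha h => lt_irrefl a ((mem_filter.1 h).2 a ha)

end Extensions

lemma addRow_injective : Function.Injective (addRow (m := m)) := fun _ _ h =>
  PermTableau.ext (congrArg (·.shape) h) (Nat.succ_injective (congrArg (·.rows) h))
    (congrArg (·.filling) h)

lemma eq_and_eq_of_addCol_eq {T T' : PermTableau m} {A A' : Finset ℕ} {hA : A ∈ T.colChoices}
    {hA' : A' ∈ T'.colChoices} (h : T.addCol A hA = T'.addCol A' hA') : T = T' ∧ A = A' := by
  have hfill := congrArg (·.filling) h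
  refine ⟨PermTableau.ext ?_ (congrArg (·.rows) h) (funext fun c => ?_), ext fun i => ?_⟩
  · simpa using congrArg (fun S : PermTableau (m + 1) => S.shape.dropFirstCol) h
  · simpa using congrFun hfill (c.1, c.2 + 1)
  · simpa using congrFun hfill (i, 0)

lemma exists_addRow_eq (hm : 1 ≤ m) (T : PermTableau (m + 1)) (h : T.shape.colLen 0 < T.rows) :
    ∃ T' : PermTableau m, T'.addRow = T := by
  have hrows : 1 < T.rows := by
    by_contra! h1
    have := rowLen_eq_zero_iff.2 (show T.shape.colLen 0 ≤ 0 by omega)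
    have := T.half
    omega
  refine ⟨{ T with
    rows := T.rows - 1
    rows_pos := by omega
    rows_ge := by omega
    half := by have := T.half; omega }, PermTableau.ext rfl (by simp; omega) rfl⟩

lemma exists_addCol_eq (T : PermTableau (m + 1)) (h : T.shape.colLen 0 = T.rows) :
    ∃ (T' : PermTableau m) (A : Finset ℕ) (hA : A ∈ T'.colChoices), T'.addCol A hA = T := by
  have hwidth : 0 < T.shape.rowLen 0 :=
    Nat.pos_of_ne_zero fun h0 => by have := rowLen_eq_zero_iff.1 h0; have := T.rows_pos; omega
  let T' : PermTableau m :=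
    { shape := T.shape.dropFirstCol
      rows := T.rows
      rows_pos := T.rows_pos
      rows_ge := colLen_dropFirstCol_le.trans h.le
      half := by have := T.half; rw [rowLen_dropFirstCol]; omega
      filling := fun c => T.filling (c.1, c.2 + 1)
      support := fun _ hc => T.support _ (mt mem_dropFirstCol.2 hc)
      col_one := fun j hj => T.col_one (j + 1) (by rw [rowLen_dropFirstCol] at hj; omega)
      avoid := fun i j hij h0 h1 j' _ =>
        T.avoid i (j + 1) (mem_dropFirstCol.1 hij) h0 h1 (j' + 1) (by omega) }
  have mem_shape_zero {i : ℕ} : (i, 0) ∈ T.shape ↔ i < T.rows := by rw [mem_iff_lt_colLen, h]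
  let A : Finset ℕ := {i ∈ range T.rows | T.filling (i, 0)}
  have hA : A ∈ T'.colChoices := by
    refine mem_colChoices.2 ⟨fun i hi => ?_, ?_⟩
    · obtain ⟨hi, h1⟩ := by simpa [A] using hi
      -- a `1` in the first column of row `i` forbids restricted `0`s further right in that row
      refine mem_unresRows.2 ⟨hi, fun j hj h0 i' hi' => ?_⟩
      by_contra h1'
      have :=
        T.avoid i (j + 1) (mem_dropFirstCol.1 hj) h0 ⟨i', hi', by simpa using h1'⟩ 0 j.succ_pos
      simp [h1] at this
    · obtain ⟨i, hi⟩ := T.col_one 0 hwidth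
      have : i < T.rows := mem_shape_zero.1 (by_contra fun hc => by simp [T.support _ hc] at hi)
      exact ⟨i, by simp [A, this, hi]⟩
  refine ⟨T', A, hA, PermTableau.ext (consCol_dropFirstCol h T'.rows_ge) rfl (funext ?_)⟩
  rintro ⟨i, _ | j⟩
  · by_cases hi : i < T.rows
    · simp [A, hi]
    · simp [A, hi, T.support _ (mt mem_shape_zero.1 hi)]
  · rfl

def extend : (Σ T : PermTableau m, Option T.colChoices) → PermTableau (m + 1)
  | ⟨T, none⟩ => T.addRow
  | ⟨T, some A⟩ => T.addCol A A.2

lemma extend_bijective (hm : 1 ≤ m) : Function.Bijective (extend (m := m)) := by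
  refine ⟨?_, fun T => ?_⟩
  · rintro ⟨T, _ | ⟨A, hA⟩⟩ ⟨T', _ | ⟨A', hA'⟩⟩ h
    · obtain rfl := addRow_injective h
      rfl
    · have := colLen_addRow_lt T
      rw [show T.addRow = T'.addCol A' hA' from h, colLen_addCol] at this
      exact absurd this (lt_irrefl _)
    · have := colLen_addRow_lt T'
      rw [show T'.addRow = T.addCol A hA from h.symm, colLen_addCol] at this
      exact absurd this (lt_irrefl _)
    · obtain ⟨rfl, rfl⟩ :=
        eq_and_eq_of_addCol_eq (show T.addCol A hA = T'.addCol A' hA' from h)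
      rfl
  · rcases T.rows_ge.lt_or_eq with h | h
    · obtain ⟨T', rfl⟩ := exists_addRow_eq hm T h
      exact ⟨⟨T', none⟩, rfl⟩
    · obtain ⟨T', A, hA, rfl⟩ := exists_addCol_eq T h
      exact ⟨⟨T', some ⟨A, hA⟩⟩, rfl⟩

instance : IsEmpty (PermTableau 0) := ⟨fun T => by have := T.half; have := T.rows_pos; omega⟩

instance : Unique (PermTableau 1) where
  default :=
    { shape := ⊥
      rows := 1
      rows_pos := one_pos
      rows_ge := by rw [colLen_eq_of_forall_mem_iff (c := 0) (by simp)]; omega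
      half := by rw [rowLen_eq_of_forall_mem_iff (c := 0) (by simp)]
      filling := fun _ => false
      support := fun _ _ => rfl
      col_one := fun j hj => by rw [rowLen_eq_of_forall_mem_iff (c := 0) (by simp)] at hj; omega
      avoid := fun _ _ h => absurd h (notMem_bot _) }
  uniq T := by
    have hcell (c : ℕ × ℕ) : c ∉ T.shape := fun hc => by
      have := mem_iff_lt_rowLen.1 hc
      have := T.shape.rowLen_anti 0 c.1 c.1.zero_le
      have := T.half
      have := T.rows_pos
      omega
    refine PermTableau.ext (YoungDiagram.ext (Finset.ext fun c => ?_)) ?_ (funext fun c => ?_)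
    · simpa using hcell c
    · have := T.half; have := T.rows_pos; show T.rows = 1; omega
    · exact T.support c (hcell c)

theorem finite : ∀ n, Finite (PermTableau n)
  | 0 => inferInstance
  | 1 => inferInstance
  | m + 2 =>
    have := finite (m + 1)
    Finite.of_surjective _ (extend_bijective m.succ_pos).2

instance (n : ℕ) : Finite (PermTableau n) := finite n

noncomputable instance (n : ℕ) : Fintype (PermTableau n) := Fintype.ofFinite _

lemma sum_succ {M : Type*} [AddCommMonoid M] (hm : 1 ≤ m) (f : PermTableau (m + 1) → M) :
    ∑ T, f T =
      ∑ T : PermTableau m, (f T.addRow + ∑ A : T.colChoices, f (T.addCol A A.2)) := by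
  rw [← (extend_bijective hm).sum_comp, Fintype.sum_sigma]
  exact sum_congr rfl fun T _ => Fintype.sum_option _

noncomputable def weight (q : ℕ) (T : PermTableau m) : ℕ := q ^ #T.unresRows

lemma weight_addRow (q : ℕ) (T : PermTableau m) : weight q T.addRow = q * weight q T := by
  rw [weight, weight, card_unresRows_addRow, pow_succ']

lemma weight_addRow_add_sum_weight_addCol (q : ℕ) (T : PermTableau m) :
    weight q T.addRow + ∑ A : T.colChoices, weight q (T.addCol A A.2) = q * weight (q + 1) T := by
  simp only [weight, card_unresRows_addRow, card_unresRows_addCol]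
  rw [sum_coe_sort T.colChoices fun A => q ^ (#A + #{i ∈ T.unresRows | ∀ a ∈ A, i < a})]
  exact pow_card_succ_add_sum_powerset_nonempty q T.unresRows

open scoped Classical

lemma sum_weight_succ_of_iff (hm : 1 ≤ m) (P : PermTableau (m + 1) → Prop)
    (Q : PermTableau m → Prop) (hrow : ∀ T, P T.addRow ↔ Q T)
    (hcol : ∀ T A (hA : A ∈ T.colChoices), P (T.addCol A hA) ↔ Q T) (q : ℕ) :
    ∑ T with P T, weight q T = q * ∑ T with Q T, weight (q + 1) T := by
  rw [sum_filter, sum_succ hm, sum_filter, mul_sum]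
  refine sum_congr rfl fun T _ => ?_
  by_cases hQ : Q T
  · simp only [hrow, hcol, hQ, if_true]
    exact weight_addRow_add_sum_weight_addCol q T
  · simp [hrow, hcol, hQ]

lemma sum_weight (q : ℕ) {j : ℕ} (hj : 1 ≤ j) :
    ∑ T : PermTableau j, weight q T = q.ascFactorial j := by
  induction j, hj using Nat.le_induction generalizing q with
  | base =>
    have : (default : PermTableau 1).unresRows = {0} := by
      ext i
      rw [mem_unresRows, mem_singleton]
      exact ⟨fun h => Nat.lt_one_iff.1 h.1, by
        rintro rfl
        exact ⟨one_pos, fun _ _ _ _ hi' => absurd hi' (Nat.not_lt_zero _)⟩⟩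
    simp [weight, this, Nat.ascFactorial_succ]
  | succ j hj ih =>
    have := sum_weight_succ_of_iff hj (fun _ => True) (fun _ => True) (fun _ => Iff.rfl)
      (fun _ _ _ => Iff.rfl) q
    simp only [filter_true] at this
    rw [this, ih, Nat.succ_ascFactorial, Nat.ascFactorial_succ]

lemma sum_weight_south_last (k q : ℕ) :
    ∑ T : PermTableau (k + 1) with T.south (k + 1), weight q T = q * q.ascFactorial k := by
  rcases k.eq_zero_or_pos with rfl | hk
  · rw [filter_true_of_mem fun T _ => south_one T, sum_weight q le_rfl]
    simp [Nat.ascFactorial_succ]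
  · rw [sum_filter, sum_succ hk, ← sum_weight q hk, mul_sum]
    refine sum_congr rfl fun T _ => ?_
    rw [if_pos (south_addRow_last T), weight_addRow,
      sum_eq_zero fun A _ => if_neg (not_south_addCol_last T A.2), add_zero]

lemma sum_weight_isCorner_succ {k : ℕ} (hk : k + 1 ≤ m) (q : ℕ) :
    ∑ T : PermTableau (m + 1) with T.IsCorner k, weight q T =
      q * ∑ T : PermTableau m with T.IsCorner k, weight (q + 1) T :=
  sum_weight_succ_of_iff (by omega) _ _ (fun _ => Iff.rfl)
    (fun T _ hA => isCorner_addCol_iff T hA hk) q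

-- Stated additively, since the corner count is a difference and `ℕ`-subtraction truncates.
lemma sum_weight_isCorner_last (k q : ℕ) :
    ∑ T : PermTableau (k + 2) with T.IsCorner (k + 1), weight q T + q * (q * q.ascFactorial k) =
      q * ((q + 1) * (q + 1).ascFactorial k) := by
  have hcorner : ∑ T : PermTableau (k + 2) with T.IsCorner (k + 1), weight q T =
      ∑ T : PermTableau (k + 1) with T.south (k + 1),
        ∑ A : T.colChoices, weight q (T.addCol A A.2) := by
    rw [sum_filter, sum_succ k.succ_pos, sum_filter]
    refine sum_congr rfl fun T _ => ?_
    rw [if_neg (not_isCorner_addRow_last T), zero_add]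
    split_ifs with h
    · exact sum_congr rfl fun A _ => if_pos ((isCorner_addCol_last_iff T A.2).2 h)
    · exact sum_eq_zero fun A _ => if_neg (mt (isCorner_addCol_last_iff T A.2).1 h)
  rw [hcorner, ← sum_weight_south_last, ← sum_weight_south_last, mul_sum, mul_sum,
    ← sum_add_distrib]
  refine sum_congr rfl fun T _ => ?_
  rw [← weight_addRow, add_comm]
  exact weight_addRow_add_sum_weight_addCol q T

lemma sum_weight_isCorner_add (k d q : ℕ) :
    ∑ T : PermTableau (k + 2 + d) with T.IsCorner (k + 1), weight q T =
      q.ascFactorial d * ∑ T : PermTableau (k + 2) with T.IsCorner (k + 1), weight (q + d) T := by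
  induction d generalizing q with
  | zero => simp
  | succ d ih =>
    rw [← add_assoc, sum_weight_isCorner_succ (by omega), ih, ← mul_assoc,
      Nat.succ_ascFactorial, ← Nat.ascFactorial_succ, add_right_comm q 1 d]
    rfl

lemma card_isCorner (k d : ℕ) :
    Nat.card {T : PermTableau (k + 2 + d) // T.IsCorner (k + 1)} + (d + 1) ^ 2 * (k + d)! =
      (d + 2) * (k + d + 1)! := by
  have hcard : Nat.card {T : PermTableau (k + 2 + d) // T.IsCorner (k + 1)} =
      d ! * ∑ T : PermTableau (k + 2) with T.IsCorner (k + 1), weight (d + 1) T := by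
    rw [Nat.card_eq_fintype_card, Fintype.card_subtype, card_eq_sum_ones,
      sum_congr rfl fun T _ => show 1 = weight 1 T from (one_pow _).symm,
      sum_weight_isCorner_add k d 1, Nat.one_ascFactorial, add_comm 1 d]
  have hbase := sum_weight_isCorner_last k (d + 1)
  have hsmall : d ! * (d + 1).ascFactorial k = (k + d)! := by
    rw [Nat.factorial_mul_ascFactorial, add_comm]
  have hlarge : (d + 1)! * (d + 2).ascFactorial k = (k + d + 1)! := by
    rw [Nat.factorial_mul_ascFactorial, add_right_comm, add_comm d k]
  calc _ = d ! * (∑ T : PermTableau (k + 2) with T.IsCorner (k + 1), weight (d + 1) T +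
        (d + 1) * ((d + 1) * (d + 1).ascFactorial k)) := by rw [hcard, ← hsmall]; ring
    _ = (d + 2) * ((d + 1)! * (d + 2).ascFactorial k) := by rw [hbase, Nat.factorial_succ]; ring
    _ = _ := by rw [hlarge]

end PermTableau

/-- For a uniformly random permutation tableau of size `n` and `1 ≤ k ≤ n - 1`, the
probability that the `k`-th border edge is a south step and the `(k+1)`-th border
edge is a west step equals `(n - k + 1)/n - (n - k)^2/(n (n - 1))`. -/
theorem corner_probability_permTableau (n k : ℕ) (hk : 1 ≤ k) (hk' : k ≤ n - 1) :
    (Nat.card {T : PermTableau n // T.south k ∧ ¬ T.south (k + 1)} : ℚ) / n ! =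
      ((n : ℚ) - k + 1) / n - ((n : ℚ) - k) ^ 2 / ((n : ℚ) * ((n : ℚ) - 1)) := by
  obtain ⟨k, rfl⟩ := Nat.exists_eq_add_of_le' hk
  obtain ⟨d, rfl⟩ : ∃ d, n = k + 2 + d := ⟨n - (k + 2), by omega⟩
  have hcard :
      (Nat.card {T : PermTableau (k + 2 + d) // T.south (k + 1) ∧ ¬ T.south (k + 1 + 1)} : ℚ) =
      (d + 2) * (k + d + 1)! - (d + 1) ^ 2 * (k + d)! := by
    rw [eq_sub_iff_add_eq]
    exact_mod_cast PermTableau.card_isCorner k d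
  have hfact : ((k + 2 + d)! : ℚ) = (k + d + 2) * (k + d + 1)! := by
    rw [show k + 2 + d = k + d + 1 + 1 by ring, Nat.factorial_succ]
    push_cast
    ring
  have hpred : ((k + 2 + d : ℕ) : ℚ) - 1 = k + d + 1 := by push_cast; ring
  rw [hcard, hfact, hpred, Nat.factorial_succ]
  have : ((k + d)! : ℚ) ≠ 0 := by positivity
  push_cast
  field_simp
  ring
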